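/- The identity ∑_{k=0}^∞ (6k-1)²·C(6k,3k) / (-512)^k = 4√6/27 holds if and only if the identity ∑_{k=0}^∞ (36k²-12k+5)·C(6k,3k) / ((2k-1)(6k-1)(6k-5)·(-512)^k) = -√6/2 holds (both series converge at geometric rates). -/

import Mathlib

set_option maxHeartbeats 1000000

open Filter Topology

noncomputable def gAux (k : ℕ) : ℝ :=
  (-7776 * (k : ℝ) ^ 5 + 15552 * k ^ 4 - 10872 * k ^ 3 + 3096 * k ^ 2 - 304 * k) /
    ((2 * (k : ℝ) - 1) * (6 * k - 1) * (6 * k - 5)) *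
    (Nat.choose (6 * k) (3 * k)) / (-512 : ℝ) ^ k

lemma den1_ne (k : ℕ) : (2 * (k : ℝ) - 1) ≠ 0 := by
  have h : (2 * (k : ℝ)) ≠ 1 := by exact_mod_cast (by omega : 2 * k ≠ 1)
  intro h'; apply h; linarith [sub_eq_zero.mp h']

lemma den2_ne (k : ℕ) : (6 * (k : ℝ) - 1) ≠ 0 := by
  have h : (6 * (k : ℝ)) ≠ 1 := by exact_mod_cast (by omega : 6 * k ≠ 1)
  intro h'; apply h; linarith [sub_eq_zero.mp h']

lemma den3_ne (k : ℕ) : (6 * (k : ℝ) - 5) ≠ 0 := by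
  have h : (6 * (k : ℝ)) ≠ 5 := by exact_mod_cast (by omega : 6 * k ≠ 5)
  intro h'; apply h; linarith [sub_eq_zero.mp h']

lemma pow_ne (k : ℕ) : ((-512 : ℝ)) ^ k ≠ 0 := pow_ne_zero _ (by norm_num)

/-- choose recurrence, cast to ℝ -/
lemma choose_rec (k : ℕ) :
    ((k : ℝ) + 1) * (3 * k + 1) * (3 * k + 2) * (Nat.choose (6 * (k+1)) (3 * (k+1))) =
      8 * (6 * k + 1) * (2 * k + 1) * (6 * k + 5) * (Nat.choose (6 * k) (3 * k)) := by
  have h1 := Nat.choose_mul_factorial_mul_factorial (by omega : 3 * k ≤ 6 * k)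
  have h2 := Nat.choose_mul_factorial_mul_factorial (by omega : 3 * (k+1) ≤ 6 * (k+1))
  have e1 : (6 * k : ℕ) - 3 * k = 3 * k := by omega
  rw [e1] at h1
  have e2 : (6 * (k+1) : ℕ) - 3 * (k+1) = 3 * k + 3 := by omega
  have e3 : (3 * (k+1) : ℕ) = 3 * k + 3 := by omega
  rw [e2, e3] at h2
  have c1 : ((Nat.choose (6*k) (3*k) : ℝ)) * (Nat.factorial (3*k)) * (Nat.factorial (3*k))
      = (Nat.factorial (6*k)) := by exact_mod_cast congrArg (Nat.cast (R := ℝ)) h1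
  have c2 : ((Nat.choose (6*(k+1)) (3*(k+1)) : ℝ)) * (Nat.factorial (3*k+3)) * (Nat.factorial (3*k+3))
      = (Nat.factorial (6*k+6)) := by
    have h6 : (6 * (k+1) : ℕ) = 6 * k + 6 := by omega
    rw [h6] at h2 ⊢
    exact_mod_cast congrArg (Nat.cast (R := ℝ)) h2
  have f3 : ((Nat.factorial (3*k+3) : ℝ)) =
      (3*(k:ℝ)+3) * (3*k+2) * (3*k+1) * (Nat.factorial (3*k)) := by
    have h : (3*k+3 : ℕ).factorial = (3*k+3) * ((3*k+2) * ((3*k+1) * (3*k).factorial)) := by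
      rw [show (3*k+3 : ℕ) = (3*k+2)+1 from rfl, Nat.factorial_succ,
        show (3*k+2 : ℕ) = (3*k+1)+1 from rfl, Nat.factorial_succ,
        show (3*k+1 : ℕ) = (3*k)+1 from rfl, Nat.factorial_succ]
    rw [h]; push_cast; ring
  have f6 : ((Nat.factorial (6*k+6) : ℝ)) =
      (6*(k:ℝ)+6) * (6*k+5) * (6*k+4) * (6*k+3) * (6*k+2) * (6*k+1) * (Nat.factorial (6*k)) := by
    have h : (6*k+6 : ℕ).factorial =
        (6*k+6) * ((6*k+5) * ((6*k+4) * ((6*k+3) * ((6*k+2) * ((6*k+1) * (6*k).factorial))))) := by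
      rw [show (6*k+6 : ℕ) = (6*k+5)+1 from rfl, Nat.factorial_succ,
        show (6*k+5 : ℕ) = (6*k+4)+1 from rfl, Nat.factorial_succ,
        show (6*k+4 : ℕ) = (6*k+3)+1 from rfl, Nat.factorial_succ,
        show (6*k+3 : ℕ) = (6*k+2)+1 from rfl, Nat.factorial_succ,
        show (6*k+2 : ℕ) = (6*k+1)+1 from rfl, Nat.factorial_succ,
        show (6*k+1 : ℕ) = (6*k)+1 from rfl, Nat.factorial_succ]
    rw [h]; push_cast; ring
  have hF3 : ((Nat.factorial (3*k) : ℝ)) ≠ 0 := by positivity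
  rw [f3, f6, ← c1] at c2
  have key : ((Nat.choose (6*(k+1)) (3*(k+1)) : ℝ)) * ((3*(k:ℝ)+1)*(3*k+2)*(3*k+3))^2 =
      (Nat.choose (6*k) (3*k)) * ((6*(k:ℝ)+6)*(6*k+5)*(6*k+4)*(6*k+3)*(6*k+2)*(6*k+1)) := by
    have hne : ((Nat.factorial (3*k) : ℝ)) * (Nat.factorial (3*k)) ≠ 0 := mul_ne_zero hF3 hF3
    apply mul_right_cancel₀ hne
    linear_combination c2
  have hpos : (9 : ℝ) * ((k:ℝ)+1) * (3*k+1) * (3*k+2) ≠ 0 := by positivity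
  apply mul_right_cancel₀ hpos
  linear_combination key

/-- the pointwise telescoping identity -/
lemma key_identity (k : ℕ) :
    (36 * (k : ℝ) ^ 2 - 12 * k + 5) * (Nat.choose (6 * k) (3 * k)) /
        ((2 * (k : ℝ) - 1) * (6 * k - 1) * (6 * k - 5) * (-512 : ℝ) ^ k)
      = (-27/8) * ((6 * (k : ℝ) - 1) ^ 2 * (Nat.choose (6 * k) (3 * k)) / (-512 : ℝ) ^ k)
        + (gAux (k+1) - gAux k) := by
  have hrec := choose_rec k
  have hC' : ((Nat.choose (6*(k+1)) (3*(k+1)) : ℝ)) =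
      8 * (6*(k:ℝ)+1) * (2*k+1) * (6*k+5) * (Nat.choose (6*k) (3*k)) /
        (((k:ℝ)+1) * (3*k+1) * (3*k+2)) := by
    rw [eq_div_iff (by positivity)]
    linarith [hrec]
  unfold gAux
  rw [hC']
  have hcast : ((k+1 : ℕ) : ℝ) = (k : ℝ) + 1 := by push_cast; ring
  rw [hcast]
  have hpow : ((-512 : ℝ)) ^ (k+1) = (-512) * (-512 : ℝ) ^ k := by ring
  rw [hpow]
  have d1 := den1_ne k; have d2 := den2_ne k; have d3 := den3_ne k
  have d1' : (2 * ((k:ℝ)+1) - 1) ≠ 0 := by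
    have := den1_ne (k+1); rwa [hcast] at this
  have d2' : (6 * ((k:ℝ)+1) - 1) ≠ 0 := by
    have := den2_ne (k+1); rwa [hcast] at this
  have d3' : (6 * ((k:ℝ)+1) - 5) ≠ 0 := by
    have := den3_ne (k+1); rwa [hcast] at this
  have dp := pow_ne k
  have hk1 : ((k:ℝ)+1) ≠ 0 := by positivity
  have h31 : (3*(k:ℝ)+1) ≠ 0 := by positivity
  have h32 : (3*(k:ℝ)+2) ≠ 0 := by positivity
  have e1 : (k:ℝ)*2-1 ≠ 0 := by rw [mul_comm]; exact d1
  have e2 : (k:ℝ)*6-1 ≠ 0 := by rw [mul_comm]; exact d2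
  have e3 : (k:ℝ)*6-5 ≠ 0 := by rw [mul_comm]; exact d3
  field_simp
  ring

lemma choose_le_64 (k : ℕ) : ((Nat.choose (6*k) (3*k) : ℝ)) ≤ 64 ^ k := by
  have h : Nat.choose (6*k) (3*k) ≤ 2 ^ (6*k) := by
    calc Nat.choose (6*k) (3*k) ≤ ∑ m ∈ Finset.range (6*k+1), Nat.choose (6*k) m := by
          apply Finset.single_le_sum (f := fun m => Nat.choose (6*k) m)
          · intro i _; exact Nat.zero_le _
          · simp only [Finset.mem_range]; omega
      _ = 2 ^ (6*k) := Nat.sum_range_choose (6*k)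
  calc ((Nat.choose (6*k) (3*k) : ℝ)) ≤ ((2:ℝ)) ^ (6*k) := by exact_mod_cast h
    _ = 64 ^ k := by rw [pow_mul]; norm_num

lemma gAux_bound (k : ℕ) : |gAux k| ≤ 100000 * (1/2 : ℝ) ^ k := by
  rcases Nat.eq_zero_or_pos k with rfl | hk
  · simp [gAux]
  · have hk1 : (1 : ℝ) ≤ (k : ℝ) := by exact_mod_cast hk
    have h2 : (0:ℝ) < 2 * k - 1 := by linarith
    have h3 : (0:ℝ) < 6 * k - 1 := by linarith
    have h5 : (0:ℝ) < 6 * k - 5 := by linarith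
    have hprod : (0:ℝ) < (2 * (k:ℝ) - 1) * (6 * k - 1) * (6 * k - 5) :=
      mul_pos (mul_pos h2 h3) h5
    unfold gAux
    rw [abs_div, abs_mul, abs_div]
    have hden : |(2 * (k:ℝ) - 1) * (6 * k - 1) * (6 * k - 5)| =
        (2 * (k:ℝ) - 1) * (6 * k - 1) * (6 * k - 5) := abs_of_pos hprod
    have hnum : |(-7776 * (k : ℝ) ^ 5 + 15552 * k ^ 4 - 10872 * k ^ 3 + 3096 * k ^ 2 - 304 * k)|
        ≤ 7776 * (k:ℝ)^5 + 15552 * k ^ 4 + 10872 * k ^ 3 + 3096 * k ^ 2 + 304 * k := by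
      have hp2 : (0:ℝ) ≤ (k:ℝ)^2 := sq_nonneg _
      have hp3 : (0:ℝ) < (k:ℝ)^3 := by positivity
      have hp4 : (0:ℝ) < (k:ℝ)^4 := by positivity
      have hp5 : (0:ℝ) < (k:ℝ)^5 := by positivity
      rw [abs_le]; constructor <;> nlinarith [pow_le_pow_left₀ (by linarith : (0:ℝ) ≤ 1) hk1 5]
    have hratio : |(-7776 * (k : ℝ) ^ 5 + 15552 * k ^ 4 - 10872 * k ^ 3 + 3096 * k ^ 2 - 304 * k)| /
        |(2 * (k:ℝ) - 1) * (6 * k - 1) * (6 * k - 5)| ≤ 100000 * (k:ℝ)^2 := by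
      rw [hden, div_le_iff₀ hprod]
      calc |(-7776 * (k : ℝ) ^ 5 + 15552 * k ^ 4 - 10872 * k ^ 3 + 3096 * k ^ 2 - 304 * k)|
          ≤ 7776 * (k:ℝ)^5 + 15552 * k ^ 4 + 10872 * k ^ 3 + 3096 * k ^ 2 + 304 * k := hnum
        _ ≤ 100000 * (k:ℝ)^2 * ((2 * (k:ℝ) - 1) * (6 * k - 1) * (6 * k - 5)) := by
            nlinarith [sq_nonneg ((k:ℝ) - 1), sq_nonneg ((k:ℝ)), mul_pos (mul_pos h2 h3) h5,
              pow_le_pow_left₀ (by linarith : (0:ℝ) ≤ 1) hk1 2,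
              pow_le_pow_left₀ (by linarith : (0:ℝ) ≤ 1) hk1 3]
    have hchoose : |(Nat.choose (6*k) (3*k) : ℝ)| ≤ 64 ^ k := by
      rw [abs_of_nonneg (by positivity)]; exact choose_le_64 k
    have hpow : |(-512 : ℝ) ^ k| = 512 ^ k := by
      rw [abs_pow]; norm_num
    rw [hpow]
    have hk2 : (k : ℝ)^2 ≤ 4 ^ k := by
      have h : k ≤ 2 ^ k := Nat.le_of_lt (Nat.lt_two_pow_self)
      have hkr : (k : ℝ) ≤ 2 ^ k := by exact_mod_cast h
      calc (k:ℝ)^2 ≤ ((2:ℝ)^k)^2 := by nlinarith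
        _ = 4 ^ k := by rw [← pow_mul, mul_comm, pow_mul]; norm_num
    calc |(-7776 * (k : ℝ) ^ 5 + 15552 * k ^ 4 - 10872 * k ^ 3 + 3096 * k ^ 2 - 304 * k)| /
          |(2 * (k:ℝ) - 1) * (6 * k - 1) * (6 * k - 5)| * |(Nat.choose (6*k) (3*k) : ℝ)| / 512 ^ k
        ≤ (100000 * (k:ℝ)^2) * 64 ^ k / 512 ^ k := by
          gcongr
          all_goals first | exact hratio | exact hchoose | positivity
      _ ≤ (100000 * (4:ℝ)^k) * 64 ^ k / 512 ^ k := by gcongr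
      _ = 100000 * (1/2 : ℝ) ^ k := by
          rw [mul_assoc, ← mul_pow, show ((4:ℝ) * 64) = 256 by norm_num, mul_div_assoc,
            ← div_pow]
          norm_num

lemma summable_gAux : Summable gAux := by
  have hb : ∀ n, ‖gAux n‖ ≤ 100000 * (1/2 : ℝ) ^ n := fun n => by
    rw [Real.norm_eq_abs]; exact gAux_bound n
  exact Summable.of_norm (Summable.of_nonneg_of_le (fun n => norm_nonneg _) hb
    ((summable_geometric_of_lt_one (by norm_num) (by norm_num)).mul_left 100000))

lemma gAux_tendsto : Tendsto gAux atTop (𝓝 0) := by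
  apply squeeze_zero_norm (fun n => by simpa [Real.norm_eq_abs] using gAux_bound n)
  have : Tendsto (fun k : ℕ => (1/2 : ℝ) ^ k) atTop (𝓝 0) :=
    tendsto_pow_atTop_nhds_zero_of_lt_one (by norm_num) (by norm_num)
  simpa using this.const_mul (100000 : ℝ)

lemma hasSum_delta : HasSum (fun k => gAux (k+1) - gAux k) 0 := by
  have hs : Summable (fun k => gAux (k+1) - gAux k) :=
    ((summable_nat_add_iff 1).2 summable_gAux).sub summable_gAux
  have h1 := hs.hasSum
  have h2 := h1.tendsto_sum_nat
  have h3 : (fun n => ∑ i ∈ Finset.range n, (gAux (i+1) - gAux i)) = fun n => gAux n - gAux 0 := by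
    funext n; exact Finset.sum_range_sub gAux n
  rw [h3] at h2
  have h0 : gAux 0 = 0 := by norm_num [gAux]
  rw [h0, ] at h2
  simp only [sub_zero] at h2
  have : ∑' k, (gAux (k+1) - gAux k) = 0 := tendsto_nhds_unique h2 gAux_tendsto
  rwa [this] at h1

theorem series_stmt_19 :
    HasSum (fun k : ℕ =>
        (6 * (k : ℝ) - 1) ^ 2 * (Nat.choose (6 * k) (3 * k)) / (-512 : ℝ) ^ k)
      (4 * Real.sqrt 6 / 27)
    ↔ HasSum (fun k : ℕ =>
        (36 * (k : ℝ) ^ 2 - 12 * k + 5) * (Nat.choose (6 * k) (3 * k)) /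
          ((2 * (k : ℝ) - 1) * (6 * k - 1) * (6 * k - 5) * (-512 : ℝ) ^ k))
      (-(Real.sqrt 6 / 2)) := by
  constructor
  · intro h
    have h' := (h.mul_left (-27/8)).add hasSum_delta
    have heq : (fun k : ℕ =>
        (36 * (k : ℝ) ^ 2 - 12 * k + 5) * (Nat.choose (6 * k) (3 * k)) /
          ((2 * (k : ℝ) - 1) * (6 * k - 1) * (6 * k - 5) * (-512 : ℝ) ^ k))
        = fun k : ℕ => (-27/8) * ((6 * (k : ℝ) - 1) ^ 2 * (Nat.choose (6 * k) (3 * k)) / (-512 : ℝ) ^ k)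
          + (gAux (k+1) - gAux k) := funext key_identity
    rw [heq, show -(Real.sqrt 6 / 2) = (-27/8) * (4 * Real.sqrt 6 / 27) + 0 by ring]
    exact h'
  · intro h
    have h2 : HasSum (fun k : ℕ =>
        (-27/8) * ((6 * (k : ℝ) - 1) ^ 2 * (Nat.choose (6 * k) (3 * k)) / (-512 : ℝ) ^ k))
        (-(Real.sqrt 6 / 2) - 0) := by
      have h' := h.sub hasSum_delta
      have heq : (fun k : ℕ =>
          (36 * (k : ℝ) ^ 2 - 12 * k + 5) * (Nat.choose (6 * k) (3 * k)) /
            ((2 * (k : ℝ) - 1) * (6 * k - 1) * (6 * k - 5) * (-512 : ℝ) ^ k)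
          - (gAux (k+1) - gAux k))
          = fun k : ℕ => (-27/8) * ((6 * (k : ℝ) - 1) ^ 2 * (Nat.choose (6 * k) (3 * k)) / (-512 : ℝ) ^ k) := by
        funext k; have := key_identity k; linarith
      rwa [heq] at h'
    have h3 := h2.mul_left (-8/27)
    have heq2 : (fun k : ℕ => (-8/27 : ℝ) * ((-27/8) * ((6 * (k : ℝ) - 1) ^ 2 * (Nat.choose (6 * k) (3 * k)) / (-512 : ℝ) ^ k)))
        = fun k : ℕ => (6 * (k : ℝ) - 1) ^ 2 * (Nat.choose (6 * k) (3 * k)) / (-512 : ℝ) ^ k := by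
      funext k; ring
    rw [heq2] at h3
    rw [show (4 * Real.sqrt 6 / 27) = -8/27 * (-(Real.sqrt 6/2) - 0) by ring]
    exact h3
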